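/- arXiv:2507.22526 — 2 statements merged into one kernel-verified Lean document; each statement's English description precedes it below -/
import Mathlib

section
/- The almost complex structure J(pα,qβ) = (1/√3)(p(α−2β), q(2α−β)) on S³ × S³ satisfies J² = −Id and is compatible with the metric g((pα,qβ),(pγ,qδ)) = (4/9)⟨(pα,qβ),(pγ,qδ)⟩ − (2/9)⟨(pβ,qα),(pγ,qδ)⟩, i.e. g(JX, JY) = g(X, Y). -/
/-!
In the coordinates `(α, β)`, `√3 J` acts by the matrix `M = [[1, -2], [2, -1]]`, and
`M² = -3`. The metric is `2/9` times the form with Gram matrix `G = [[2, -1], [-1, 2]]`,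
and `Mᵀ G M = 3 G`; the factors `3` cancel against `(1/√3)²`.
-/

open RealInnerProductSpace

namespace NearlyKahlerS3S3

section Module

variable (R : Type*) {E : Type*} [CommRing R] [AddCommGroup E] [Module R E]

def scaledJ : E × E →ₗ[R] E × E :=
  (LinearMap.fst R E E - (2 : R) • LinearMap.snd R E E).prod
    ((2 : R) • LinearMap.fst R E E - LinearMap.snd R E E)

@[simp]
theorem scaledJ_apply (v : E × E) :
    scaledJ R v = (v.1 - (2 : R) • v.2, (2 : R) • v.1 - v.2) := rfl

theorem scaledJ_scaledJ (v : E × E) : scaledJ R (scaledJ R v) = (-3 : R) • v := by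
  simp only [scaledJ_apply, Prod.ext_iff, Prod.smul_fst, Prod.smul_snd]
  constructor <;> module

end Module

section InnerProduct

variable {E : Type*} [NormedAddCommGroup E] [InnerProductSpace ℝ E]

noncomputable def J (v : E × E) : E × E := (Real.sqrt 3)⁻¹ • scaledJ ℝ v

noncomputable def metric (v w : E × E) : ℝ :=
  (4 / 9) * (⟪v.1, w.1⟫ + ⟪v.2, w.2⟫) - (2 / 9) * (⟪v.2, w.1⟫ + ⟪v.1, w.2⟫)

theorem inv_sqrt_three_mul_self : (Real.sqrt 3)⁻¹ * (Real.sqrt 3)⁻¹ = 3⁻¹ := by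
  rw [← mul_inv, Real.mul_self_sqrt (by norm_num)]

theorem J_J (v : E × E) : J (J v) = -v := by
  rw [J, J, map_smul, smul_smul, scaledJ_scaledJ, smul_smul, inv_sqrt_three_mul_self]
  norm_num

theorem metric_smul (c : ℝ) (v w : E × E) : metric (c • v) (c • w) = c * c * metric v w := by
  simp only [metric, Prod.smul_fst, Prod.smul_snd, real_inner_smul_left, real_inner_smul_right]
  ring

theorem metric_scaledJ (v w : E × E) :
    metric (scaledJ ℝ v) (scaledJ ℝ w) = 3 * metric v w := by
  simp only [metric, scaledJ_apply, inner_sub_left, inner_sub_right, real_inner_smul_left,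
    real_inner_smul_right]
  ring

theorem metric_J (v w : E × E) : metric (J v) (J w) = metric v w := by
  rw [J, J, metric_smul, metric_scaledJ, ← mul_assoc, inv_sqrt_three_mul_self]
  norm_num

end InnerProduct

end NearlyKahlerS3S3

/-- The almost complex structure `J(pα,qβ) = (1/√3)(p(α−2β), q(2α−β))` on
`S³ × S³`, written in the coordinates `(α, β)` of a tangent vector
`(pα, qβ)` with `α, β` imaginary quaternions, satisfies `J² = −Id` and is
compatible with the nearly Kähler metric
`g((α,β),(γ,δ)) = (4/9)(⟨α,γ⟩+⟨β,δ⟩) − (2/9)(⟨β,γ⟩+⟨α,δ⟩)`. -/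
theorem s3s3_almost_complex_structure
    (g : (Quaternion ℝ × Quaternion ℝ) → (Quaternion ℝ × Quaternion ℝ) → ℝ)
    (hg : ∀ v w, g v w = (4 / 9) * (⟪v.1, w.1⟫ + ⟪v.2, w.2⟫)
      - (2 / 9) * (⟪v.2, w.1⟫ + ⟪v.1, w.2⟫))
    (J : (Quaternion ℝ × Quaternion ℝ) → (Quaternion ℝ × Quaternion ℝ))
    (hJ : ∀ v, J v = (Real.sqrt 3)⁻¹ • (v.1 - (2 : ℝ) • v.2, (2 : ℝ) • v.1 - v.2)) :
    (∀ v : Quaternion ℝ × Quaternion ℝ, v.1.re = 0 → v.2.re = 0 →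
      J (J v) = -v) ∧
    (∀ v w : Quaternion ℝ × Quaternion ℝ, v.1.re = 0 → v.2.re = 0 →
      w.1.re = 0 → w.2.re = 0 → g (J v) (J w) = g v w) := by
  obtain rfl : J = NearlyKahlerS3S3.J := funext hJ
  obtain rfl : g = NearlyKahlerS3S3.metric := funext₂ hg
  exact ⟨fun v _ _ => NearlyKahlerS3S3.J_J v,
    fun v w _ _ _ _ => NearlyKahlerS3S3.metric_J v w⟩
end

section
/- Suppose real numbers h11, h22, h33, h44, h55, h23 and an angle θ₂ with sin θ₂ ≠ 0, cos θ₂ ≠ 0 satisfy: h11 − 2h22 + h55 + 2 h23 tan θ₂ = 0, −2h11 + h22 + h44 − h23 tan θ₂ = 0, h11 − 2h44 + h55 = 0, 5h44 − 5h55 + 2h23 csc(2θ₂) = 0, and h11 − 2h33 + h55 + 2h23 cot θ₂ = 0. Then h23 = 0 and h11 = h22 = h33 = h44 = h55. -/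
/-! The combination `e1 + 2 * e2` eliminates `tan θ`; together with `e3` it gives
`h11 = h44 = h55`. Then `e4` reduces to `h23 / sin (2θ) = 0`, so `h23 = 0`, after which
`e1` and `e5` give `h22 = h33 = h11`. -/

theorem eq_zero_and_umbilic_of_linear_system {h11 h22 h33 h44 h55 h23 t k u : ℝ} (hu : u ≠ 0)
    (e1 : h11 - 2 * h22 + h55 + 2 * h23 * t = 0)
    (e2 : -2 * h11 + h22 + h44 - h23 * t = 0)
    (e3 : h11 - 2 * h44 + h55 = 0)
    (e4 : 5 * h44 - 5 * h55 + 2 * h23 * u = 0)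
    (e5 : h11 - 2 * h33 + h55 + 2 * h23 * k = 0) :
    h23 = 0 ∧ h11 = h22 ∧ h22 = h33 ∧ h33 = h44 ∧ h44 = h55 := by
  have h14 : h11 = h44 := by linear_combination (e3 - e1 - 2 * e2) / 4
  have h45 : h44 = h55 := by linear_combination (e3 - e1 - 2 * e2) / 4 - e3
  have h23u : h23 * u = 0 := by linear_combination (e4 - 5 * h45) / 2
  have h23 : h23 = 0 := (mul_eq_zero.mp h23u).resolve_right hu
  subst h23
  refine ⟨rfl, ?_, ?_, ?_, h45⟩ <;> linarith

/-- Final linear system for a constant sectional curvature hypersurface of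
`F(ℂ³)` whose normal has components in all three distributions (Table 8):
it forces `h23 = 0` and total umbilicity. -/
theorem flag_manifold_final_linear_system
    (h11 h22 h33 h44 h55 h23 θ : ℝ)
    (hs : Real.sin θ ≠ 0) (hc : Real.cos θ ≠ 0)
    (e1 : h11 - 2 * h22 + h55 + 2 * h23 * Real.tan θ = 0)
    (e2 : -2 * h11 + h22 + h44 - h23 * Real.tan θ = 0)
    (e3 : h11 - 2 * h44 + h55 = 0)
    (e4 : 5 * h44 - 5 * h55 + 2 * h23 * (1 / Real.sin (2 * θ)) = 0)
    (e5 : h11 - 2 * h33 + h55 + 2 * h23 * (Real.cos θ / Real.sin θ) = 0) :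
    h23 = 0 ∧ h11 = h22 ∧ h22 = h33 ∧ h33 = h44 ∧ h44 = h55 := by
  have hsin2 : Real.sin (2 * θ) ≠ 0 := by
    rw [Real.sin_two_mul]
    exact mul_ne_zero (mul_ne_zero two_ne_zero hs) hc
  exact eq_zero_and_umbilic_of_linear_system (one_div_ne_zero hsin2) e1 e2 e3 e4 e5
end
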